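/- For f continuous and compactly supported on ℝⁿ, the function t ↦ R_E f(u,t) is differentiable for t > 0 and ∂_t R_E f(u,t) = λ ν^{n−1} t^{n−1} ∫_{S^{n−1}} f(λ t y₁ + u₁, ν t ỹ + ũ, ν t y_n) dσ(y), where σ is the surface measure on the unit sphere S^{n−1} ⊂ ℝⁿ. -/

import Mathlib

open MeasureTheory Real
open scoped RealInnerProductSpace

noncomputable section

/-- `Ed d` is Euclidean space `ℝ^d` (used for the middle block of coordinates). -/
abbrev Ed (d : ℕ) := EuclideanSpace ℝ (Fin d)

/-- Points of `ℝⁿ` (with `n = d + 2`) are written `(x₁, x̃, xₙ) : ℝ × Ed d × ℝ`. -/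
abbrev X (d : ℕ) := ℝ × Ed d × ℝ

/-- Centers/foci parameters `u = (u₁, ũ)` live in the hyperplane `ℝ^{n-1}`. -/
abbrev U (d : ℕ) := ℝ × Ed d

/-- Euclidean norm on `ℝ × Ed d × ℝ`. -/
def normX (d : ℕ) (x : X d) : ℝ := Real.sqrt (x.1 ^ 2 + ‖x.2.1‖ ^ 2 + x.2.2 ^ 2)

/-- Euclidean norm on `ℝ × Ed d`. -/
def normU (d : ℕ) (u : U d) : ℝ := Real.sqrt (u.1 ^ 2 + ‖u.2‖ ^ 2)

/-- The solid ellipsoid `E_{u,t}`. -/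
def ellipsoid (d : ℕ) (lam nu : ℝ) (u : U d) (t : ℝ) : Set (X d) :=
  {x | (x.1 - u.1) ^ 2 / lam ^ 2 + ‖x.2.1 - u.2‖ ^ 2 / nu ^ 2 + x.2.2 ^ 2 / nu ^ 2 ≤ t ^ 2}

/-- The elliptical Radon transform `R_E f (u, t) = ∫_{E_{u,t}} f`. -/
def RE (d : ℕ) (lam nu : ℝ) (f : X d → ℝ) (u : U d) (t : ℝ) : ℝ :=
  ∫ x in ellipsoid d lam nu u t, f x

/-- The backprojection operator `R_E^*`. -/
def REstar (d : ℕ) (lam nu : ℝ) (g : U d × ℝ → ℝ) (x : X d) : ℝ :=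
  ∫ u : U d,
    g (u, Real.sqrt ((u.1 - x.1) ^ 2 / lam ^ 2 + ‖u.2 - x.2.1‖ ^ 2 / nu ^ 2 +
        x.2.2 ^ 2 / nu ^ 2))

/-- Bessel function of the first kind `J_μ`, defined by its power series. -/
def besselJ (μ x : ℝ) : ℝ :=
  ∑' m : ℕ, ((-1 : ℝ) ^ m / (m.factorial * Real.Gamma (m + μ + 1))) *
    (x / 2) ^ (2 * (m : ℝ) + μ)

/-- The radial Hankel-type transform `H_n` (complex-valued version). -/
def hankel (n : ℕ) (g : ℝ → ℂ) (ρ : ℝ) : ℂ :=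
  ((ρ ^ (1 - (n : ℝ) / 2) : ℝ) : ℂ) *
    ∫ t in Set.Ioi (0 : ℝ), ((t ^ ((n : ℝ) / 2) * besselJ (((n : ℝ) - 2) / 2) (t * ρ) : ℝ) : ℂ) * g t

/-- The radial Hankel-type transform `H_n` (real-valued version). -/
def hankelR (n : ℕ) (g : ℝ → ℝ) (ρ : ℝ) : ℝ :=
  ρ ^ (1 - (n : ℝ) / 2) *
    ∫ t in Set.Ioi (0 : ℝ), t ^ ((n : ℝ) / 2) * besselJ (((n : ℝ) - 2) / 2) (t * ρ) * g t

/-- Unnormalized `n`-dimensional Fourier transform on `ℝ × Ed d × ℝ`. -/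
def ftX (d : ℕ) (f : X d → ℝ) (ξ : X d) : ℂ :=
  ∫ x : X d, (f x : ℂ) *
    Complex.exp (-Complex.I * ((x.1 * ξ.1 + (inner ℝ x.2.1 ξ.2.1 : ℝ) + x.2.2 * ξ.2.2 : ℝ) : ℂ))

/-- Unnormalized `(n-1)`-dimensional Fourier transform on `ℝ × Ed d`. -/
def ftU (d : ℕ) (g : U d → ℂ) (ξ : U d) : ℂ :=
  ∫ u : U d, g u * Complex.exp (-Complex.I * ((u.1 * ξ.1 + (inner ℝ u.2 ξ.2 : ℝ) : ℝ) : ℂ))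


/-- Identification of `EuclideanSpace ℝ (Fin (d+2))` with `ℝ × Ed d × ℝ`. -/
def toProd (d : ℕ) (y : EuclideanSpace ℝ (Fin (d + 2))) : X d :=
  (y ⟨0, by omega⟩, (WithLp.toLp 2 (fun j : Fin d => y ⟨j.1 + 1, by omega⟩) : Ed d), y ⟨d + 1, by omega⟩)

/-!
The affine map `A x = (λ x₁ + u₁, ν x̃ + ũ, ν xₙ)` has Jacobian `λ ν^{n-1}` and carries the
Euclidean ball of radius `s` onto the ellipsoid `E_{u,s}`, so
`R_E f (u, s) = λ ν^{n-1} ∫_{|y| ≤ s} f (A y) dy`.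
Mathlib's polar decomposition of Haar measure (`homeomorphUnitSphereProd`, `Measure.toSphere`)
turns any ball integral into `∫₀ˢ r^{n-1} ∫_{S^{n-1}} g (r y) dσ(y) dr`; for continuous `g` the
inner integral is continuous in `r`, and the fundamental theorem of calculus gives the derivative.
-/

open MeasureTheory Set Metric

namespace MeasureTheory

variable {E F : Type*} [NormedAddCommGroup E] [NormedSpace ℝ E] [FiniteDimensional ℝ E]
  [MeasurableSpace E] [BorelSpace E] [NormedAddCommGroup F] [NormedSpace ℝ F]
  (μ : Measure E) [μ.IsAddHaarMeasure]

local notation "dim" => Module.finrank ℝ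

theorem integral_eq_integral_Ioi_integral_toSphere [Nontrivial E] {g : E → F}
    (hg : Integrable g μ) :
    ∫ x, g x ∂μ = ∫ r in Ioi (0 : ℝ), r ^ (dim E - 1) • ∫ y, g (r • (y : E)) ∂μ.toSphere := by
  set e := homeomorphUnitSphereProd E
  have he := μ.measurePreserving_homeomorphUnitSphereProd
  have hcomp : (fun p : sphere (0 : E) 1 × Ioi (0 : ℝ) => g ((p.2 : ℝ) • (p.1 : E))) ∘ e
      = g ∘ Subtype.val := by
    funext x
    simp [e, smul_inv_smul₀ (norm_ne_zero_iff.2 x.2)]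
  have hint : Integrable (fun p : sphere (0 : E) 1 × Ioi (0 : ℝ) => g ((p.2 : ℝ) • (p.1 : E)))
      (μ.toSphere.prod (.volumeIoiPow (dim E - 1))) := by
    rw [← he.integrable_comp_emb e.measurableEmbedding, hcomp,
      ← integrableOn_iff_comap_subtypeVal (measurableSet_singleton _).compl]
    exact hg.integrableOn
  calc ∫ x, g x ∂μ = ∫ x : ({(0 : E)}ᶜ : Set E), g x ∂(μ.comap Subtype.val) := by
        rw [integral_subtype_comap (measurableSet_singleton _).compl, restrict_compl_singleton]
    _ = ∫ p, g ((p.2 : ℝ) • (p.1 : E)) ∂(μ.toSphere.prod (.volumeIoiPow (dim E - 1))) := by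
        rw [← he.integral_comp e.measurableEmbedding]
        exact integral_congr_ae (.of_forall fun x => (congrFun hcomp x).symm)
    _ = ∫ r, ∫ y, g ((r : ℝ) • (y : E)) ∂μ.toSphere ∂(.volumeIoiPow (dim E - 1)) :=
        integral_prod_symm _ hint
    _ = _ := by
        simp only [Measure.volumeIoiPow, ENNReal.ofReal]
        rw [integral_withDensity_eq_integral_smul
            (measurable_subtype_coe.pow_const _).real_toNNReal,
          integral_subtype_comap measurableSet_Ioi
            (fun r : ℝ => (r ^ (dim E - 1)).toNNReal • ∫ y, g (r • (y : E)) ∂μ.toSphere)]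
        refine setIntegral_congr_fun measurableSet_Ioi fun r hr => ?_
        rw [NNReal.smul_def, Real.coe_toNNReal _ (pow_nonneg (le_of_lt hr) _)]

theorem setIntegral_closedBall_eq_intervalIntegral_toSphere [Nontrivial E] {g : E → F} {s : ℝ}
    (hs : 0 ≤ s) (hg : IntegrableOn g (closedBall 0 s) μ) :
    ∫ x in closedBall (0 : E) s, g x ∂μ
      = ∫ r in (0 : ℝ)..s, r ^ (dim E - 1) • ∫ y, g (r • (y : E)) ∂μ.toSphere := by
  rw [← integral_indicator measurableSet_closedBall,
    integral_eq_integral_Ioi_integral_toSphere μ (hg.integrable_indicator measurableSet_closedBall),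
    intervalIntegral.integral_of_le hs, ← Ioi_inter_Iic, ← setIntegral_indicator measurableSet_Iic]
  refine setIntegral_congr_fun measurableSet_Ioi fun r (hr : 0 < r) => ?_
  have hmem : ∀ y : sphere (0 : E) 1, r • (y : E) ∈ closedBall (0 : E) s ↔ r ∈ Iic s := fun y => by
    rw [mem_closedBall_zero_iff, norm_smul, norm_eq_of_mem_sphere y, mul_one,
      Real.norm_of_nonneg hr.le, mem_Iic]
  by_cases hrs : r ∈ Iic s
  · simp only [indicator_of_mem hrs, indicator_of_mem ((hmem _).2 hrs)]
  · simp only [indicator_of_notMem hrs, indicator_of_notMem (mt (hmem _).1 hrs), integral_zero,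
      smul_zero]

theorem continuous_integral_toSphere_smul {g : E → F} (hg : Continuous g) :
    Continuous fun r : ℝ => ∫ y, g (r • (y : E)) ∂μ.toSphere := by
  simpa using continuous_parametric_integral_of_continuous (μ := μ.toSphere)
    (f := fun (r : ℝ) (y : sphere (0 : E) 1) => g (r • (y : E))) (by fun_prop) isCompact_univ

theorem hasDerivAt_setIntegral_closedBall [Nontrivial E] [CompleteSpace F] {g : E → F}
    (hg : Continuous g) {t : ℝ} (ht : 0 < t) :
    HasDerivAt (fun s => ∫ x in closedBall (0 : E) s, g x ∂μ)
      (t ^ (dim E - 1) • ∫ y, g (t • (y : E)) ∂μ.toSphere) t := by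
  have hψ : Continuous fun r : ℝ => r ^ (dim E - 1) • ∫ y, g (r • (y : E)) ∂μ.toSphere :=
    (continuous_pow _).smul (continuous_integral_toSphere_smul μ hg)
  refine (intervalIntegral.integral_hasDerivAt_right (hψ.intervalIntegrable 0 t)
    (hψ.stronglyMeasurableAtFilter _ _) hψ.continuousAt).congr_of_eventuallyEq ?_
  filter_upwards [Ioi_mem_nhds ht] with s (hs : 0 < s)
  exact setIntegral_closedBall_eq_intervalIntegral_toSphere μ hs.le
    (hg.continuousOn.integrableOn_compact (isCompact_closedBall _ _))

end MeasureTheory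

def toProdEquiv (d : ℕ) : EuclideanSpace ℝ (Fin (d + 2)) ≃ᵐ X d :=
  (MeasurableEquiv.toLp 2 (Fin (d + 2) → ℝ)).symm.trans <|
    (MeasurableEquiv.piFinSuccAbove (fun _ => ℝ) 0).trans <|
      (MeasurableEquiv.refl ℝ).prodCongr <|
        (MeasurableEquiv.piFinSuccAbove (fun _ : Fin (d + 1) => ℝ) (Fin.last d)).trans <|
          MeasurableEquiv.prodComm.trans <|
            (MeasurableEquiv.toLp 2 (Fin d → ℝ)).prodCongr (MeasurableEquiv.refl ℝ)

theorem coe_toProdEquiv (d : ℕ) : ⇑(toProdEquiv d) = toProd d := by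
  funext y
  refine Prod.ext ?_ (Prod.ext ?_ ?_)
  · rfl
  · ext j
    show y ((0 : Fin (d + 2)).succAbove ((Fin.last d).succAbove j)) = _
    simp only [Fin.succAbove_zero, Fin.succAbove_last, toProd]
    rfl
  · show y ((0 : Fin (d + 2)).succAbove (Fin.last d)) = _
    simp only [Fin.succAbove_zero, toProd]
    rfl

theorem measurePreserving_toProd (d : ℕ) :
    MeasurePreserving (toProd d) (volume : Measure (EuclideanSpace ℝ (Fin (d + 2))))
      (volume : Measure (X d)) := by
  rw [← coe_toProdEquiv]
  exact (EuclideanSpace.volume_preserving_symm_measurableEquiv_toLp (Fin (d + 2))).trans <|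
    ((volume_preserving_piFinSuccAbove (fun _ : Fin (d + 2) => ℝ) 0).trans <|
      (MeasurePreserving.id volume).prod <|
        ((volume_preserving_piFinSuccAbove (fun _ : Fin (d + 1) => ℝ) (Fin.last d)).trans <|
          (Measure.measurePreserving_swap.trans <|
            ((EuclideanSpace.volume_preserving_symm_measurableEquiv_toLp (Fin d)).symm).prod
              (MeasurePreserving.id volume))))

theorem measurableEmbedding_toProd (d : ℕ) : MeasurableEmbedding (toProd d) :=
  coe_toProdEquiv d ▸ (toProdEquiv d).measurableEmbedding

theorem sq_norm_toProd (d : ℕ) (y : EuclideanSpace ℝ (Fin (d + 2))) :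
    (toProd d y).1 ^ 2 + ‖(toProd d y).2.1‖ ^ 2 + (toProd d y).2.2 ^ 2 = ‖y‖ ^ 2 := by
  rw [EuclideanSpace.norm_sq_eq y, Fin.sum_univ_succ, Fin.sum_univ_castSucc,
    EuclideanSpace.norm_sq_eq, add_assoc]
  simp only [Real.norm_eq_abs, sq_abs]
  rfl

theorem toProd_smul (d : ℕ) (c : ℝ) (y : EuclideanSpace ℝ (Fin (d + 2))) :
    toProd d (c • y) = c • toProd d y :=
  rfl

def ellipsoidScaling (d : ℕ) (lam nu : ℝ) : X d →ₗ[ℝ] X d :=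
  (lam • LinearMap.id).prodMap ((nu • LinearMap.id).prodMap (nu • LinearMap.id))

theorem det_ellipsoidScaling (d : ℕ) (lam nu : ℝ) :
    LinearMap.det (ellipsoidScaling d lam nu) = lam * nu ^ (d + 1) := by
  simp [ellipsoidScaling, LinearMap.det_prodMap, LinearMap.det_smul, pow_succ]

def ellipsoidMap (d : ℕ) (lam nu : ℝ) (u : U d) (x : X d) : X d :=
  (lam * x.1 + u.1, nu • x.2.1 + u.2, nu * x.2.2)

theorem ellipsoidMap_eq_add (d : ℕ) (lam nu : ℝ) (u : U d) :
    ellipsoidMap d lam nu u = fun x => ellipsoidScaling d lam nu x + (u.1, u.2, 0) := by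
  funext x
  ext <;> simp [ellipsoidMap, ellipsoidScaling]

-- Instance search does not get through the nested product on its own.
instance instIsAddHaarMeasureVolumeX (d : ℕ) : (volume : Measure (X d)).IsAddHaarMeasure := by
  have : ((volume : Measure (Ed d)).prod (volume : Measure ℝ)).IsAddHaarMeasure := inferInstance
  rw [Measure.volume_eq_prod, Measure.volume_eq_prod]
  infer_instance

theorem map_ellipsoidMap_volume {d : ℕ} {lam nu : ℝ} (hlam : lam ≠ 0) (hnu : nu ≠ 0) (u : U d) :
    Measure.map (ellipsoidMap d lam nu u) volume
      = ENNReal.ofReal |(lam * nu ^ (d + 1))⁻¹| • volume := by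
  have hdet := det_ellipsoidScaling d lam nu
  rw [ellipsoidMap_eq_add, ← Function.comp_def (· + ((u.1, u.2, 0) : X d)),
    ← Measure.map_map (measurable_add_const _)
      (LinearMap.continuous_of_finiteDimensional _).measurable,
    Measure.map_linearMap_addHaar_eq_smul_addHaar _ (by rw [hdet]; positivity),
    Measure.map_smul, map_add_right_eq_self, hdet]

theorem toProd_preimage_ellipsoidMap_preimage_ellipsoid {d : ℕ} {lam nu : ℝ} (hlam : lam ≠ 0)
    (hnu : nu ≠ 0) (u : U d) {s : ℝ} (hs : 0 ≤ s) :
    toProd d ⁻¹' (ellipsoidMap d lam nu u ⁻¹' ellipsoid d lam nu u s) = closedBall 0 s := by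
  ext y
  simp only [mem_preimage, ellipsoid, ellipsoidMap, mem_ofPred_eq, add_sub_cancel_right,
    norm_smul, Real.norm_eq_abs, mul_pow, sq_abs, mul_div_cancel_left₀ _ (pow_ne_zero 2 hlam),
    mul_div_cancel_left₀ _ (pow_ne_zero 2 hnu), sq_norm_toProd, mem_closedBall_zero_iff]
  exact sq_le_sq₀ (norm_nonneg y) hs

theorem RE_eq_mul_setIntegral_closedBall {d : ℕ} {lam nu : ℝ} (hlam : lam ≠ 0) (hnu : nu ≠ 0)
    {f : X d → ℝ} (hf : AEStronglyMeasurable f volume) (u : U d) {s : ℝ} (hs : 0 ≤ s) :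
    RE d lam nu f u s = |lam * nu ^ (d + 1)| *
      ∫ y in closedBall (0 : EuclideanSpace ℝ (Fin (d + 2))) s,
        f (ellipsoidMap d lam nu u (toProd d y)) := by
  have hmap := map_ellipsoidMap_volume hlam hnu u
  have hmeas : Measurable (ellipsoidMap d lam nu u) := by unfold ellipsoidMap; fun_prop
  have hE : MeasurableSet (ellipsoid d lam nu u s) :=
    (isClosed_le (by fun_prop) continuous_const).measurableSet
  have hf' : AEStronglyMeasurable f (Measure.map (ellipsoidMap d lam nu u) volume) := by
    rw [hmap]; exact hf.smul_measure _
  rw [← toProd_preimage_ellipsoidMap_preimage_ellipsoid hlam hnu u hs,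
    (measurePreserving_toProd d).setIntegral_preimage_emb (measurableEmbedding_toProd d)
      (fun x => f (ellipsoidMap d lam nu u x)),
    ← setIntegral_map hE hf' hmeas.aemeasurable, hmap, Measure.restrict_smul,
    integral_smul_measure, ENNReal.toReal_ofReal (abs_nonneg _), smul_eq_mul, ← mul_assoc, abs_inv,
    mul_inv_cancel₀ (abs_pos.2 (by positivity)).ne', one_mul, RE]

theorem stmt3_general (d : ℕ) (lam nu : ℝ) (hlam : 1 < lam) (hnu : nu = Real.sqrt (lam ^ 2 - 1))
    (f : X d → ℝ) (hf : Continuous f) (u : U d) (t : ℝ) (ht : 0 < t) :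
    HasDerivAt (fun s => RE d lam nu f u s)
      (lam * nu ^ (d + 1) * t ^ (d + 1) *
        ∫ y : Metric.sphere (0 : EuclideanSpace ℝ (Fin (d + 2))) 1,
          f (lam * t * (toProd d y).1 + u.1, (nu * t) • (toProd d y).2.1 + u.2,
            nu * t * (toProd d y).2.2)
          ∂((volume : Measure (EuclideanSpace ℝ (Fin (d + 2)))).toSphere)) t := by
  have hlam0 : 0 < lam := zero_lt_one.trans hlam
  have hnu0 : 0 < nu := by rw [hnu]; exact Real.sqrt_pos.2 (by nlinarith)
  set g := fun y : EuclideanSpace ℝ (Fin (d + 2)) => f (ellipsoidMap d lam nu u (toProd d y))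
  have hg : Continuous g := by unfold g ellipsoidMap toProd; fun_prop
  have hRE : (fun s => RE d lam nu f u s) =ᶠ[nhds t]
      fun s => |lam * nu ^ (d + 1)| * ∫ y in closedBall 0 s, g y := by
    filter_upwards [Ioi_mem_nhds ht] with s hs
    exact RE_eq_mul_setIntegral_closedBall hlam0.ne' hnu0.ne' hf.aestronglyMeasurable u hs.le
  refine (((hasDerivAt_setIntegral_closedBall volume hg ht).const_mul _).congr_of_eventuallyEq
    hRE).congr_deriv ?_
  have hg_smul : ∀ y : EuclideanSpace ℝ (Fin (d + 2)), g (t • y) =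
      f (lam * t * (toProd d y).1 + u.1, (nu * t) • (toProd d y).2.1 + u.2,
        nu * t * (toProd d y).2.2) := fun y => by
    simp only [g, ellipsoidMap, toProd_smul, Prod.smul_fst, Prod.smul_snd, smul_eq_mul, smul_smul,
      mul_assoc]
  rw [abs_of_pos (by positivity), finrank_euclideanSpace_fin, smul_eq_mul]
  simp only [hg_smul, mul_assoc, Nat.add_succ_sub_one]

/-- `t ↦ R_E f (u, t)` is differentiable for `t > 0`, with derivative a
sphere integral against the surface measure on `S^{n-1}`. -/
theorem stmt3 (d : ℕ) (lam nu : ℝ) (hlam : 1 < lam) (hnu : nu = Real.sqrt (lam ^ 2 - 1))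
    (f : X d → ℝ) (hf : Continuous f) (hsupp : HasCompactSupport f)
    (u : U d) (t : ℝ) (ht : 0 < t) :
    HasDerivAt (fun s => RE d lam nu f u s)
      (lam * nu ^ (d + 1) * t ^ (d + 1) *
        ∫ y : Metric.sphere (0 : EuclideanSpace ℝ (Fin (d + 2))) 1,
          f (lam * t * (toProd d y).1 + u.1, (nu * t) • (toProd d y).2.1 + u.2,
            nu * t * (toProd d y).2.2)
          ∂((volume : Measure (EuclideanSpace ℝ (Fin (d + 2)))).toSphere)) t :=
  stmt3_general d lam nu hlam hnu f hf u t ht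

end
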